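/- arXiv:2204.02395 — 3 statements merged into one kernel-verified Lean document; each statement's English description precedes it below -/
import Mathlib

section
/- Let f : ℝⁿ → ℝⁿ, V : ℝⁿ → ℝ, c ∈ ℝ, ε > 0, δ > 0, and set K := {x ∈ ℝⁿ : V(x) ≤ c}. Assume V(x) ≥ 0 for all x ∈ K, and V(f(x)) ≤ V(x) − δ for every x ∈ K with ‖x‖_∞ ≥ ε. Then for every x₀ ∈ K there exists k ≤ ⌊c/δ⌋ + 1 such that the iterate x_k of the trajectory x_{j+1} = f(x_j) satisfies ‖x_k‖_∞ < ε. -/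
/-! While a trajectory stays outside the ball, each step lowers `V` by at least `δ`, so it never
leaves the sublevel set `{V ≤ c}`; after `⌊c/δ⌋ + 1` such steps `V` would drop below
`c - (⌊c/δ⌋ + 1) δ < 0`, contradicting nonnegativity of `V` on that set. -/

section LyapunovDecrease

variable {α : Type*} {f : α → α} {V : α → ℝ} {P : α → Prop} {c δ : ℝ}

theorem apply_iterate_le_sub_mul_of_decrease (hδ : 0 ≤ δ)
    (hdec : ∀ x, V x ≤ c → P x → V (f x) ≤ V x - δ) {x : α} (hx : V x ≤ c) :
    ∀ k : ℕ, (∀ j < k, P (f^[j] x)) → V (f^[k] x) ≤ c - k * δ := by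
  intro k
  induction k with
  | zero => intro _; simpa using hx
  | succ k ih =>
    intro hP
    have hVk : V (f^[k] x) ≤ c - k * δ := ih fun j hj => hP j (Nat.lt_succ_of_lt hj)
    have hkδ : 0 ≤ (k : ℝ) * δ := by positivity
    have hstep := hdec _ (by linarith) (hP k (Nat.lt_succ_self k))
    rw [Function.iterate_succ_apply']
    push_cast
    linarith

theorem exists_le_floor_div_not_iterate_of_decrease (hδ : 0 < δ)
    (hVpos : ∀ x, V x ≤ c → 0 ≤ V x) (hdec : ∀ x, V x ≤ c → P x → V (f x) ≤ V x - δ)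
    {x : α} (hx : V x ≤ c) : ∃ k ≤ ⌊c / δ⌋₊, ¬ P (f^[k] x) := by
  by_contra! hP
  set N := ⌊c / δ⌋₊ + 1
  have hVN : V (f^[N] x) ≤ c - N * δ :=
    apply_iterate_le_sub_mul_of_decrease hδ.le hdec hx N fun j hj => hP j (Nat.lt_succ_iff.mp hj)
  have hcN : c < N * δ := (div_lt_iff₀ hδ).mp (by exact_mod_cast Nat.lt_floor_add_one (c / δ))
  have hNδ : 0 ≤ (N : ℝ) * δ := by positivity
  have := hVpos _ (by linarith)
  linarith

end LyapunovDecrease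

theorem finite_time_reaching_general {n : ℕ}
    (f : (Fin n → ℝ) → (Fin n → ℝ)) (V : (Fin n → ℝ) → ℝ)
    (c ε δ : ℝ) (hδ : 0 < δ)
    (hVpos : ∀ x : Fin n → ℝ, V x ≤ c → 0 ≤ V x)
    (hdec : ∀ x : Fin n → ℝ, V x ≤ c → ε ≤ ‖x‖ → V (f x) ≤ V x - δ) :
    ∀ x₀ : Fin n → ℝ, V x₀ ≤ c →
      ∃ k ≤ Nat.floor (c / δ) + 1, ‖f^[k] x₀‖ < ε := by
  intro x₀ hx₀
  obtain ⟨k, hk, hout⟩ := exists_le_floor_div_not_iterate_of_decrease hδ hVpos hdec hx₀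
  exact ⟨k, hk.trans (Nat.le_succ _), not_le.mp hout⟩

/-- Quantitative finite-time reaching bound underlying Theorem 3 of the paper:
with a nonnegative Lyapunov function and a uniform decrement `δ` outside the
sup-norm ball of radius `ε`, any trajectory of `x_{j+1} = f x_j` starting in
the sublevel set `{V ≤ c}` enters the ball within at most `⌊c/δ⌋ + 1` steps.
The state space `Fin n → ℝ` carries the sup norm. -/
theorem finite_time_reaching {n : ℕ}
    (f : (Fin n → ℝ) → (Fin n → ℝ)) (V : (Fin n → ℝ) → ℝ)
    (c ε δ : ℝ) (hε : 0 < ε) (hδ : 0 < δ)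
    (hVpos : ∀ x : Fin n → ℝ, V x ≤ c → 0 ≤ V x)
    (hdec : ∀ x : Fin n → ℝ, V x ≤ c → ε ≤ ‖x‖ → V (f x) ≤ V x - δ) :
    ∀ x₀ : Fin n → ℝ, V x₀ ≤ c →
      ∃ k ≤ Nat.floor (c / δ) + 1, ‖f^[k] x₀‖ < ε :=
  finite_time_reaching_general f V c ε δ hδ hVpos hdec
end

section
/- Let f : ℝⁿ → ℝⁿ and V : ℝⁿ → ℝ be continuous, let D̄ ⊆ ℝⁿ, c ∈ ℝ, ε > 0, and suppose: K := {x ∈ ℝⁿ : V(x) ≤ c} is compact and K ⊆ D̄; V(0) = 0 and V(x) > 0 for all x ∈ D̄ ∖ {0}; and V(f(x)) < V(x) for every x ∈ D̄ with ‖x‖_∞ ≥ ε. Then for every x₀ ∈ K, the trajectory x_{j+1} = f(x_j) reaches the set B_ε = {x ∈ ℝⁿ : ‖x‖_∞ < ε} in finitely many steps; i.e., the sublevel set K is contained in the set of initial states from which the trajectory enters B_ε in finite time. -/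
/-! On the compact set `K ∩ {ε ≤ ‖x‖}` the continuous function `x ↦ V x - V (f x)` is positive,
hence bounded below by some `δ > 0`. A trajectory starting in `K` that never entered `B_ε` would
stay in this set (`V` does not increase along it, so it never leaves `K`), and `V` would drop by
`δ` at every step, contradicting the boundedness of `V` on the compact `K`. -/

section

variable {X : Type*} [TopologicalSpace X] {f : X → X} {V : X → ℝ} {S : Set X}

theorem IsCompact.exists_pos_forall_add_le_of_lt (hS : IsCompact S) (hf : Continuous f)
    (hV : Continuous V) (hdec : ∀ x ∈ S, V (f x) < V x) :
    ∃ δ > 0, ∀ x ∈ S, V (f x) + δ ≤ V x := by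
  have hcont : ContinuousOn (fun x => V x - V (f x)) S := (hV.sub (hV.comp hf)).continuousOn
  obtain ⟨δ, hδ, hle⟩ := hS.exists_forall_le' hcont (a := 0) fun x hx => sub_pos.2 (hdec x hx)
  exact ⟨δ, hδ, fun x hx => by linarith [hle x hx]⟩

theorem IsCompact.exists_iterate_notMem (hS : IsCompact S) (hf : Continuous f)
    (hV : Continuous V) (hdec : ∀ x ∈ S, V (f x) < V x) (x : X) :
    ∃ k : ℕ, f^[k] x ∉ S := by
  by_contra! horbit
  obtain ⟨δ, hδ, hstep⟩ := hS.exists_pos_forall_add_le_of_lt hf hV hdec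
  obtain ⟨m, hm⟩ := hS.bddBelow_image hV.continuousOn
  have hdrop : ∀ k : ℕ, V (f^[k] x) + k * δ ≤ V x := by
    intro k
    induction k with
    | zero => simp
    | succ k ih =>
      rw [Function.iterate_succ_apply']
      push_cast
      linarith [hstep _ (horbit k)]
  obtain ⟨k, hk⟩ := exists_nat_gt ((V x - m) / δ)
  rw [div_lt_iff₀ hδ] at hk
  linarith [hdrop k, hm ⟨_, horbit k, rfl⟩]

end

theorem sublevel_subset_ROA_general {n : ℕ}
    (f : (Fin n → ℝ) → (Fin n → ℝ)) (V : (Fin n → ℝ) → ℝ)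
    (hf : Continuous f) (hV : Continuous V)
    (Dbar : Set (Fin n → ℝ)) (c ε : ℝ)
    (hKcpt : IsCompact {x : Fin n → ℝ | V x ≤ c})
    (hKD : {x : Fin n → ℝ | V x ≤ c} ⊆ Dbar)
    (hdec : ∀ x ∈ Dbar, ε ≤ ‖x‖ → V (f x) < V x) :
    ∀ x₀ : Fin n → ℝ, V x₀ ≤ c → ∃ k : ℕ, ‖f^[k] x₀‖ < ε := by
  intro x₀ hx₀
  by_contra! hfar
  have hsub : ∀ k : ℕ, V (f^[k] x₀) ≤ c := by
    intro k
    induction k with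
    | zero => exact hx₀
    | succ k ih =>
      rw [Function.iterate_succ_apply']
      exact (hdec _ (hKD ih) (hfar k)).le.trans ih
  have hS : IsCompact ({x | V x ≤ c} ∩ {x | ε ≤ ‖x‖}) :=
    hKcpt.inter_right (isClosed_le continuous_const continuous_norm)
  obtain ⟨k, hk⟩ := hS.exists_iterate_notMem hf hV (fun x hx => hdec x (hKD hx.1) hx.2) x₀
  exact hk ⟨hsub k, hfar k⟩

/-- Theorem 3 of the paper: the sublevel set `K = {V ≤ c}` of the verified
Lyapunov function contained in the region of interest `D̄` is a verified
under-approximation of the region of attraction of the sup-norm ball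
`B_ε = {x : ‖x‖_∞ < ε}`: from every initial state in `K`, the trajectory of
`x_{j+1} = f x_j` reaches `B_ε` in finitely many steps.
The state space `Fin n → ℝ` carries the sup norm. -/
theorem sublevel_subset_ROA {n : ℕ}
    (f : (Fin n → ℝ) → (Fin n → ℝ)) (V : (Fin n → ℝ) → ℝ)
    (hf : Continuous f) (hV : Continuous V)
    (Dbar : Set (Fin n → ℝ)) (c ε : ℝ) (hε : 0 < ε)
    (hKcpt : IsCompact {x : Fin n → ℝ | V x ≤ c})
    (hKD : {x : Fin n → ℝ | V x ≤ c} ⊆ Dbar)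
    (hV0 : V 0 = 0) (hVpos : ∀ x ∈ Dbar, x ≠ 0 → 0 < V x)
    (hdec : ∀ x ∈ Dbar, ε ≤ ‖x‖ → V (f x) < V x) :
    ∀ x₀ : Fin n → ℝ, V x₀ ≤ c → ∃ k : ℕ, ‖f^[k] x₀‖ < ε :=
  sublevel_subset_ROA_general f V hf hV Dbar c ε hKcpt hKD hdec
end

section
/- Let f : ℝⁿ → ℝⁿ and V : ℝⁿ → ℝ be continuous, let D̄ ⊆ ℝⁿ, c ∈ ℝ, ε > 0, and suppose: K := {x ∈ ℝⁿ : V(x) ≤ c} is compact and K ⊆ D̄; V(f(x)) < V(x) for every x ∈ D̄ with ‖x‖_∞ ≥ ε; and additionally f(x) ∈ K for every x ∈ K with ‖x‖_∞ < ε. Then for every x₀ ∈ K the trajectory x_{j+1} = f(x_j) remains in K for all time and visits the set B_ε = {x ∈ ℝⁿ : ‖x‖_∞ < ε} infinitely often (for every N ∈ ℕ there exists k ≥ N with ‖x_k‖_∞ < ε). -/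
/-!
Outside `B_ε` every point of `K` strictly decreases `V`, and inside `B_ε` the extra hypothesis keeps
the next point in `K`, so `K` is forward invariant. On the compact set `S = K \ B_ε` the continuous
decrease `V x - V (f x)` is bounded below by some `δ > 0`, so a trajectory staying in `S` from some
time on would have `V` drop by `δ` at every step, contradicting that `V` is bounded below on `S`.
-/

open Function Set Filter

theorem le_sub_mul_of_forall_succ_le_sub {u : ℕ → ℝ} {δ : ℝ} (hstep : ∀ k, u (k + 1) ≤ u k - δ)
    (k : ℕ) : u k ≤ u 0 - k * δ := by
  induction k with
  | zero => simp
  | succ k ih =>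
    push_cast
    linarith [hstep k]

section Descent

variable {X : Type*} [TopologicalSpace X] {f : X → X} {V : X → ℝ} {S : Set X}

theorem IsCompact.exists_iterate_notMem_of_lt (hS : IsCompact S) (hV : ContinuousOn V S)
    (hVf : ContinuousOn (V ∘ f) S) (hdec : ∀ x ∈ S, V (f x) < V x) (x : X) :
    ∃ k, f^[k] x ∉ S := by
  by_contra! htraj
  have hne : S.Nonempty := ⟨x, htraj 0⟩
  obtain ⟨z, hzS, hz⟩ := hS.exists_isMinOn hne (hV.sub hVf)
  obtain ⟨w, -, hw⟩ := hS.exists_isMinOn hne hV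
  have hδ : 0 < V z - V (f z) := sub_pos.mpr (hdec z hzS)
  have hstep : ∀ k, V (f^[k + 1] x) ≤ V (f^[k] x) - (V z - V (f z)) := fun k => by
    have hmin : V z - V (f z) ≤ V (f^[k] x) - V (f (f^[k] x)) := hz (htraj k)
    rw [iterate_succ_apply']
    linarith
  obtain ⟨k, hk⟩ := exists_nat_gt ((V x - V w) / (V z - V (f z)))
  rw [div_lt_iff₀ hδ] at hk
  have hmin : V w ≤ V (f^[k] x) := hw (htraj k)
  have hdrop : V (f^[k] x) ≤ V x - k * (V z - V (f z)) :=
    le_sub_mul_of_forall_succ_le_sub (u := fun k => V (f^[k] x)) hstep k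
  linarith

theorem IsCompact.frequently_iterate_notMem_of_lt (hS : IsCompact S) (hV : ContinuousOn V S)
    (hVf : ContinuousOn (V ∘ f) S) (hdec : ∀ x ∈ S, V (f x) < V x) (x : X) :
    ∃ᶠ k in atTop, f^[k] x ∉ S := by
  refine frequently_atTop.mpr fun N => ?_
  obtain ⟨k, hk⟩ := hS.exists_iterate_notMem_of_lt hV hVf hdec (f^[N] x)
  exact ⟨k + N, Nat.le_add_left N k, by rwa [iterate_add_apply]⟩

end Descent

theorem invariance_and_recurrence_general {n : ℕ}
    (f : (Fin n → ℝ) → (Fin n → ℝ)) (V : (Fin n → ℝ) → ℝ)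
    (hf : Continuous f) (hV : Continuous V)
    (Dbar : Set (Fin n → ℝ)) (c ε : ℝ)
    (hKcpt : IsCompact {x : Fin n → ℝ | V x ≤ c})
    (hKD : {x : Fin n → ℝ | V x ≤ c} ⊆ Dbar)
    (hdec : ∀ x ∈ Dbar, ε ≤ ‖x‖ → V (f x) < V x)
    (hinv : ∀ x : Fin n → ℝ, V x ≤ c → ‖x‖ < ε → V (f x) ≤ c) :
    ∀ x₀ : Fin n → ℝ, V x₀ ≤ c →
      (∀ k : ℕ, V (f^[k] x₀) ≤ c) ∧
      (∀ N : ℕ, ∃ k ≥ N, ‖f^[k] x₀‖ < ε) := by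
  intro x₀ hx₀
  set K := {x : Fin n → ℝ | V x ≤ c}
  have hK : MapsTo f K K := fun x hx => by
    rcases lt_or_ge ‖x‖ ε with hsmall | hlarge
    · exact hinv x hx hsmall
    · exact (hdec x (hKD hx) hlarge).le.trans hx
  have hS : IsCompact (K ∩ {x | ε ≤ ‖x‖}) :=
    hKcpt.inter_right (isClosed_le continuous_const continuous_norm)
  have hrec := hS.frequently_iterate_notMem_of_lt hV.continuousOn (hV.comp hf).continuousOn
    (fun x hx => hdec x (hKD hx.1) hx.2) x₀
  refine ⟨fun k => hK.iterate k hx₀, fun N => ?_⟩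
  obtain ⟨k, hkN, hk⟩ := frequently_atTop.mp hrec N
  exact ⟨k, hkN, lt_of_not_ge fun hlarge => hk ⟨hK.iterate k hx₀, hlarge⟩⟩

/-- Asymptotic-stability-of-`B_ε` conclusion of Theorem 3 of the paper, made
precise: if moreover `f` maps the part of the sublevel set `K = {V ≤ c}` inside
the sup-norm ball `B_ε` back into `K`, then every trajectory of
`x_{j+1} = f x_j` starting in `K` remains in `K` for all time and visits `B_ε`
infinitely often. The state space `Fin n → ℝ` carries the sup norm. -/
theorem invariance_and_recurrence {n : ℕ}
    (f : (Fin n → ℝ) → (Fin n → ℝ)) (V : (Fin n → ℝ) → ℝ)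
    (hf : Continuous f) (hV : Continuous V)
    (Dbar : Set (Fin n → ℝ)) (c ε : ℝ) (hε : 0 < ε)
    (hKcpt : IsCompact {x : Fin n → ℝ | V x ≤ c})
    (hKD : {x : Fin n → ℝ | V x ≤ c} ⊆ Dbar)
    (hdec : ∀ x ∈ Dbar, ε ≤ ‖x‖ → V (f x) < V x)
    (hinv : ∀ x : Fin n → ℝ, V x ≤ c → ‖x‖ < ε → V (f x) ≤ c) :
    ∀ x₀ : Fin n → ℝ, V x₀ ≤ c →
      (∀ k : ℕ, V (f^[k] x₀) ≤ c) ∧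
      (∀ N : ℕ, ∃ k ≥ N, ‖f^[k] x₀‖ < ε) :=
  invariance_and_recurrence_general f V hf hV Dbar c ε hKcpt hKD hdec hinv
end
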